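/- For any logic program P under the answer set semantics and any literal q, the program e(P,q) obtained by partial evaluation of P with respect to q (replacing every occurrence of q in the body of a rule by the bodies of the rules defining q, in all combinations) has exactly the same answer sets as P. -/
import Mathlib


/-- A ground rule of A-Prolog: head (none = ⊥, i.e. a constraint),
positive body literals, and default-negated body literals. -/
structure ASPRule (L : Type) where
  head : Option L
  pos : Set L
  neg : Set L

/-- `Closed X Y P`: `Y` is closed under the reduct of `P` relative to `X`
(the reduct keeps a rule iff no default-negated body literal is in `X`):
whenever the positive body of a kept rule is contained in `Y`, its head is a
literal belonging to `Y` (constraints can never have satisfied bodies). -/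
def Closed {L : Type} (X Y : Set L) (P : Set (ASPRule L)) : Prop :=
  ∀ r ∈ P, (∀ l ∈ r.neg, l ∉ X) → r.pos ⊆ Y → ∃ l, r.head = some l ∧ l ∈ Y

/-- Consistency of a set of literals w.r.t. a complement operation. -/
def LConsistent {L : Type} (compl : L → L) (X : Set L) : Prop :=
  ∀ l ∈ X, compl l ∉ X

/-- `X` is an answer set of `P`: `X` is consistent and is minimal among the
sets closed under the Gelfond–Lifschitz reduct `P^X`. -/
def AnswerSet {L : Type} (compl : L → L) (P : Set (ASPRule L)) (X : Set L) : Prop :=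
  LConsistent compl X ∧ Closed X X P ∧ ∀ Y ⊆ X, Closed X Y P → Y = X

/-- Brass–Dix partial evaluation of `P` w.r.t. the literal `q`: every rule
whose positive body contains `q` is replaced, for every rule `q ← Γ` of the
definition of `q` in `P`, by the rule obtained by substituting the body `Γ`
for `q`; rules not containing `q` in the positive body are kept. -/
def pe {L : Type} (P : Set (ASPRule L)) (q : L) : Set (ASPRule L) :=
  { r | r ∈ P ∧ q ∉ r.pos } ∪
  { r' | ∃ r ∈ P, q ∈ r.pos ∧ ∃ d ∈ P, d.head = some q ∧
         r' = ⟨r.head, (r.pos \ {q}) ∪ d.pos, r.neg ∪ d.neg⟩ }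

lemma closed_pe {L : Type} {X Y : Set L} {P : Set (ASPRule L)} {q : L}
    (h : Closed X Y P) : Closed X Y (pe P q) := by
  rintro r (⟨hrP, -⟩ | ⟨r0, hr0, hq, d, hd, hdh, rfl⟩) hneg hpos
  · exact h r hrP hneg hpos
  · simp only at hneg hpos ⊢
    have hqY : q ∈ Y := by
      obtain ⟨l, hl, hlY⟩ := h d hd (fun l hl => hneg l (Or.inr hl))
        (fun l hl => hpos (Or.inr hl))
      rw [hdh] at hl
      cases hl
      exact hlY
    refine h r0 hr0 (fun l hl => hneg l (Or.inl hl)) ?_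
    intro l hl
    by_cases hlq : l = q
    · subst hlq; exact hqY
    · exact hpos (Or.inl ⟨hl, hlq⟩)

/-- Brass–Dix lemma: `P` and its partial evaluation `e(P,q)`
have exactly the same answer sets. -/
theorem partial_evaluation_preserves_answer_sets {L : Type} (compl : L → L)
    (P : Set (ASPRule L)) (q : L) :
    ∀ X : Set L, AnswerSet compl P X ↔ AnswerSet compl (pe P q) X := by
  intro X
  constructor
  · rintro ⟨hcons, hclX, hmin⟩
    refine ⟨hcons, closed_pe hclX, ?_⟩
    intro Y hYX hclY
    by_cases hs : ∃ d ∈ P, d.head = some q ∧ (∀ l ∈ d.neg, l ∉ X) ∧ d.pos ⊆ Y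
    · -- q is supported in Y: Y is closed under P
      obtain ⟨d, hd, hdh, hdneg, hdpos⟩ := hs
      refine hmin Y hYX ?_
      intro r hr hneg hpos
      by_cases hq : q ∈ r.pos
      · obtain ⟨l, hl, hlY⟩ :=
          hclY ⟨r.head, (r.pos \ {q}) ∪ d.pos, r.neg ∪ d.neg⟩
            (Or.inr ⟨r, hr, hq, d, hd, hdh, rfl⟩)
            (by rintro l (hl | hl); exacts [hneg l hl, hdneg l hl])
            (by rintro l (⟨hl, -⟩ | hl); exacts [hpos hl, hdpos hl])
        exact ⟨l, hl, hlY⟩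
      · exact hclY r (Or.inl ⟨hr, hq⟩) hneg hpos
    · -- q unsupported: Y \ {q} is closed under P, hence equals X
      push_neg at hs
      have hZ : Closed X (Y \ {q}) P := by
        intro r hr hneg hpos
        have hq : q ∉ r.pos := fun hq => (hpos hq).2 rfl
        obtain ⟨l, hl, hlY⟩ := hclY r (Or.inl ⟨hr, hq⟩) hneg
          (fun l hl => (hpos hl).1)
        refine ⟨l, hl, hlY, ?_⟩
        rintro rfl
        exact hs r hr hl hneg (fun l hl => (hpos hl).1)
      have := hmin (Y \ {q}) (fun l hl => hYX hl.1) hZ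
      exact Set.Subset.antisymm hYX (this ▸ Set.diff_subset)
  · rintro ⟨hcons, hclX, hmin⟩
    have hminP : ∀ Y ⊆ X, Closed X Y P → Y = X :=
      fun Y hYX hclY => hmin Y hYX (closed_pe hclY)
    refine ⟨hcons, ?_, hminP⟩
    intro r hr hneg hpos
    by_cases hq : q ∈ r.pos
    · -- q ∈ X; find a supporting rule via minimality under pe
      have hqX : q ∈ X := hpos hq
      have hs : ∃ r' ∈ pe P q, r'.head = some q ∧ (∀ l ∈ r'.neg, l ∉ X) ∧
          r'.pos ⊆ X \ {q} := by
        by_contra hs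
        push_neg at hs
        have : X \ {q} = X := by
          refine hmin _ Set.diff_subset ?_
          intro r' hr' hneg' hpos'
          obtain ⟨l, hl, hlX⟩ := hclX r' hr' hneg' (fun l hl => (hpos' hl).1)
          refine ⟨l, hl, hlX, ?_⟩
          rintro rfl
          exact hs r' hr' hl hneg' hpos'
        rw [← this] at hqX
        exact hqX.2 rfl
      obtain ⟨r', hr', hr'h, hr'neg, hr'pos⟩ := hs
      -- extract d ∈ P with head q, neg ok, pos ⊆ X
      have hd : ∃ d ∈ P, d.head = some q ∧ (∀ l ∈ d.neg, l ∉ X) ∧ d.pos ⊆ X := by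
        rcases hr' with ⟨hP, -⟩ | ⟨r0, hr0, hq0, d, hdP, hdh, rfl⟩
        · exact ⟨r', hP, hr'h, hr'neg, fun l hl => (hr'pos hl).1⟩
        · exact ⟨d, hdP, hdh, fun l hl => hr'neg l (Or.inr hl),
            fun l hl => (hr'pos (Or.inr hl)).1⟩
      obtain ⟨d, hdP, hdh, hdneg, hdpos⟩ := hd
      obtain ⟨l, hl, hlX⟩ :=
        hclX ⟨r.head, (r.pos \ {q}) ∪ d.pos, r.neg ∪ d.neg⟩
          (Or.inr ⟨r, hr, hq, d, hdP, hdh, rfl⟩)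
          (by rintro l (hl | hl); exacts [hneg l hl, hdneg l hl])
          (by rintro l (⟨hl, -⟩ | hl); exacts [hpos hl, hdpos hl])
      exact ⟨l, hl, hlX⟩
    · exact hclX r (Or.inl ⟨hr, hq⟩) hneg hpos
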